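/- Let α = e α_{i,r} + f α_{i,r+1} ∈ O_K^+ with i ≥ -1 odd, 0 ≤ r < u_{i+2}, e ≥ 1, f ≥ 0. Then N(α) < √Δ · ((r+1)e + (r+2)f) · (e + f). -/

import Mathlib

open Real Filter

noncomputable def omg (D : ℕ) : ℝ := if D % 4 = 1 then (1 + Real.sqrt D) / 2 else Real.sqrt D

noncomputable def omgc (D : ℕ) : ℝ := if D % 4 = 1 then (1 - Real.sqrt D) / 2 else -Real.sqrt D

noncomputable def sigmaD (D : ℕ) : ℝ := omg D + (⌊-omgc D⌋ : ℤ)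

noncomputable def gam (D : ℕ) : ℕ → ℝ
  | 0 => sigmaD D
  | n + 1 => 1 / (gam D n - ⌊gam D n⌋)

/-- partial quotients of the continued fraction of σ_D -/
noncomputable def uD (D : ℕ) (n : ℕ) : ℤ := ⌊gam D n⌋

noncomputable def emb1 (D : ℕ) (x : ℤ × ℤ) : ℝ := (x.1 : ℝ) + (x.2 : ℝ) * omg D

noncomputable def emb2 (D : ℕ) (x : ℤ × ℤ) : ℝ := (x.1 : ℝ) + (x.2 : ℝ) * omgc D

def conjp (D : ℕ) (x : ℤ × ℤ) : ℤ × ℤ := if D % 4 = 1 then (x.1 + x.2, -x.2) else (x.1, -x.2)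

def TotPos (D : ℕ) (x : ℤ × ℤ) : Prop := 0 < emb1 D x ∧ 0 < emb2 D x

def Indec (D : ℕ) (x : ℤ × ℤ) : Prop :=
  TotPos D x ∧ ¬ ∃ y z : ℤ × ℤ, TotPos D y ∧ TotPos D z ∧ x = y + z

noncomputable def Nm (D : ℕ) (x : ℤ × ℤ) : ℝ := emb1 D x * emb2 D x

noncomputable def disc (D : ℕ) : ℝ := if D % 4 = 1 then (D : ℝ) else 4 * (D : ℝ)

def UniqDec (D : ℕ) (x : ℤ × ℤ) : Prop :=
  ∃! m : Multiset (ℤ × ℤ), (∀ y ∈ m, Indec D y) ∧ m.sum = x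

/-- first real embedding of α_i = p_i - q_i ω_D' -/
noncomputable def ar (D : ℕ) (p q : ℤ → ℤ) (i : ℤ) : ℝ := (p i : ℝ) - (q i : ℝ) * omgc D

/-- second real embedding (Galois conjugate) of α_i -/
noncomputable def ac (D : ℕ) (p q : ℤ → ℤ) (i : ℤ) : ℝ := (p i : ℝ) - (q i : ℝ) * omg D

/-- first embedding of the semiconvergent α_{i,r} = α_i + r α_{i+1} -/
noncomputable def ar2 (D : ℕ) (p q : ℤ → ℤ) (i r : ℤ) : ℝ := ar D p q i + (r : ℝ) * ar D p q (i + 1)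

/-- conjugate embedding of the semiconvergent α_{i,r} -/
noncomputable def ac2 (D : ℕ) (p q : ℤ → ℤ) (i r : ℤ) : ℝ := ac D p q i + (r : ℝ) * ac D p q (i + 1)

/-- N_i = |N(α_i)| -/
noncomputable def Ni (D : ℕ) (p q : ℤ → ℤ) (i : ℤ) : ℝ := |ar D p q i * ac D p q i|

/-! For odd `i` the convergents satisfy `0 < α_i ≤ α_{i+1}` and `α_i' > 0 > α_{i+1}'`; the signs of
the conjugates come from `α_i' = -γ_{i+2} α_{i+1}'`, where `γ_n > 1` are the complete quotients of
`σ_D`. The determinant identity `p_i q_{i+1} - p_{i+1} q_i = 1` turns into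
`α_{i+1} α_i' - α_i α_{i+1}' = ω_D - ω_D' = √Δ`, so `α_{i+1} α_i' < √Δ`. Finally
`α ≤ ((r+1)e + (r+2)f) α_{i+1}` and `α' ≤ (e+f) α_i'`. -/

section QuadraticIrrational

variable {D : ℕ}

lemma one_lt_sqrt_natCast (hD : 2 ≤ D) : 1 < √(D : ℝ) :=
  Real.lt_sqrt_of_sq_lt (by norm_num; exact_mod_cast hD)

lemma omgc_neg (hD : 2 ≤ D) : omgc D < 0 := by
  have := one_lt_sqrt_natCast hD
  unfold omgc; split <;> linarith

lemma one_lt_omg (hD : 2 ≤ D) : 1 < omg D := by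
  have := one_lt_sqrt_natCast hD
  unfold omg; split <;> linarith

lemma omg_sub_omgc : omg D - omgc D = √(disc D) := by
  unfold omg omgc disc
  split
  · ring
  · rw [Real.sqrt_mul' _ (Nat.cast_nonneg D), show (4 : ℝ) = 2 ^ 2 by norm_num,
      Real.sqrt_sq zero_le_two]
    ring

lemma irrational_omg (hD : 2 ≤ D) (hsq : Squarefree D) : Irrational (omg D) := by
  have hsqrt : Irrational √(D : ℝ) := by
    refine irrational_sqrt_natCast_iff.2 fun ⟨k, hk⟩ => ?_
    have := Nat.isUnit_iff.1 (hsq k (by rw [hk]))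
    subst this; omega
  unfold omg; split
  · exact_mod_cast (irrational_div_intCast_iff (m := 2)).2
      ⟨two_ne_zero, (irrational_intCast_add_iff (m := 1)).2 hsqrt⟩
  · exact hsqrt

-- `uD D 0 = ⌊ω⌋ + ⌊-ω'⌋`, and `-ω' = ω - 1` or `ω` according to `D % 4`.
lemma ceil_uD_zero_div_two : ⌈(uD D 0 : ℚ) / 2⌉ = ⌊omg D⌋ := by
  have hu : uD D 0 = ⌊omg D⌋ + ⌊-omgc D⌋ := Int.floor_add_intCast _ _
  by_cases h : D % 4 = 1
  · have : ⌊-omgc D⌋ = ⌊omg D⌋ - 1 := by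
      rw [← Int.floor_sub_one]; unfold omg omgc; simp only [if_pos h]; ring_nf
    rw [hu, this, show ((⌊omg D⌋ + (⌊omg D⌋ - 1) : ℤ) : ℚ) / 2 = -1 / 2 + ⌊omg D⌋ by
      push_cast; ring, Int.ceil_add_intCast]
    norm_num
  · have : -omgc D = omg D := by unfold omg omgc; simp only [if_neg h]; ring
    rw [hu, this, show ((⌊omg D⌋ + ⌊omg D⌋ : ℤ) : ℚ) / 2 = ⌊omg D⌋ by push_cast; ring,
      Int.ceil_intCast]

end QuadraticIrrational

section ContinuedFraction

variable {D : ℕ}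

lemma fract_gam_zero : Int.fract (gam D 0) = Int.fract (omg D) :=
  Int.fract_add_intCast _ _

lemma irrational_gam (hD : 2 ≤ D) (hsq : Squarefree D) (n : ℕ) : Irrational (gam D n) := by
  induction n with
  | zero => exact irrational_add_intCast_iff.2 (irrational_omg hD hsq)
  | succ n ih =>
    rw [gam, one_div, irrational_inv_iff]
    exact irrational_sub_intCast_iff.2 ih

lemma fract_gam_pos (hD : 2 ≤ D) (hsq : Squarefree D) (n : ℕ) : 0 < Int.fract (gam D n) :=
  Int.fract_pos.2 ((irrational_gam hD hsq n).ne_int _)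

lemma gam_succ_mul_fract (hD : 2 ≤ D) (hsq : Squarefree D) (n : ℕ) :
    gam D (n + 1) * Int.fract (gam D n) = 1 := by
  rw [gam, Int.self_sub_floor]
  exact one_div_mul_cancel (fract_gam_pos hD hsq n).ne'

lemma one_lt_gam (hD : 2 ≤ D) (hsq : Squarefree D) (n : ℕ) : 1 < gam D n := by
  cases n with
  | zero =>
    have : (0 : ℝ) ≤ ⌊-omgc D⌋ := by
      exact_mod_cast Int.floor_nonneg.2 (neg_nonneg.2 (omgc_neg hD).le)
    show 1 < omg D + ⌊-omgc D⌋
    linarith [one_lt_omg hD]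
  | succ n =>
    rw [gam, Int.self_sub_floor]
    exact (one_lt_div (fract_gam_pos hD hsq n)).2 (Int.fract_lt_one _)

lemma one_le_uD (hD : 2 ≤ D) (hsq : Squarefree D) (n : ℕ) : 1 ≤ uD D n :=
  Int.le_floor.2 (by exact_mod_cast (one_lt_gam hD hsq n).le)

end ContinuedFraction

lemma semiconvergent_combination_mul_le {x₀ x₁ y₀ y₁ r e f : ℝ} (hx₀ : 0 ≤ x₀) (hx : x₀ ≤ x₁)
    (hy₀ : 0 ≤ y₀) (hy₁ : y₁ ≤ 0) (hr : 0 ≤ r) (he : 0 ≤ e) (hf : 0 ≤ f) :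
    (e * (x₀ + r * x₁) + f * (x₀ + (r + 1) * x₁)) * (e * (y₀ + r * y₁) + f * (y₀ + (r + 1) * y₁)) ≤
      ((r + 1) * e + (r + 2) * f) * (e + f) * (x₁ * y₀) := by
  have hw : 0 ≤ r * e + (r + 1) * f := by positivity
  have hA₀ : 0 ≤ e * (x₀ + r * x₁) + f * (x₀ + (r + 1) * x₁) := by
    have : 0 ≤ x₁ := hx₀.trans hx
    positivity
  have hA : e * (x₀ + r * x₁) + f * (x₀ + (r + 1) * x₁) ≤ ((r + 1) * e + (r + 2) * f) * x₁ := by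
    nlinarith [mul_le_mul_of_nonneg_left hx (add_nonneg he hf)]
  have hB : e * (y₀ + r * y₁) + f * (y₀ + (r + 1) * y₁) ≤ (e + f) * y₀ := by
    nlinarith [mul_nonpos_of_nonneg_of_nonpos hw hy₁]
  calc _ ≤ (e * (x₀ + r * x₁) + f * (x₀ + (r + 1) * x₁)) * ((e + f) * y₀) :=
        mul_le_mul_of_nonneg_left hB hA₀
    _ ≤ ((r + 1) * e + (r + 2) * f) * x₁ * ((e + f) * y₀) :=
        mul_le_mul_of_nonneg_right hA (by positivity)
    _ = _ := by ring

structure IsConvergents (D : ℕ) (p q : ℤ → ℤ) : Prop where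
  p_neg_one : p (-1) = 1
  q_neg_one : q (-1) = 0
  p_zero : p 0 = ⌊omg D⌋
  q_zero : q 0 = 1
  p_add_two : ∀ i : ℤ, -1 ≤ i → p (i + 2) = uD D (i + 2).toNat * p (i + 1) + p i
  q_add_two : ∀ i : ℤ, -1 ≤ i → q (i + 2) = uD D (i + 2).toNat * q (i + 1) + q i

lemma ar_mul_ac_sub_ar_mul_ac {D : ℕ} (p q : ℤ → ℤ) (i : ℤ) :
    ar D p q (i + 1) * ac D p q i - ar D p q i * ac D p q (i + 1) =
      (p i * q (i + 1) - p (i + 1) * q i : ℤ) * (omg D - omgc D) := by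
  simp only [ar, ac]; push_cast; ring

namespace IsConvergents

variable {D : ℕ} {p q : ℤ → ℤ}

lemma ar_add_two (h : IsConvergents D p q) {i : ℤ} (hi : -1 ≤ i) :
    ar D p q (i + 2) = uD D (i + 2).toNat * ar D p q (i + 1) + ar D p q i := by
  simp only [ar, h.p_add_two i hi, h.q_add_two i hi]; push_cast; ring

lemma ac_add_two (h : IsConvergents D p q) {i : ℤ} (hi : -1 ≤ i) :
    ac D p q (i + 2) = uD D (i + 2).toNat * ac D p q (i + 1) + ac D p q i := by
  simp only [ac, h.p_add_two i hi, h.q_add_two i hi]; push_cast; ring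

lemma det_eq_one_of_odd (h : IsConvergents D p q) {i : ℤ} (hi : -1 ≤ i) (hodd : Odd i) :
    p i * q (i + 1) - p (i + 1) * q i = 1 := by
  have hstep : ∀ j, -1 ≤ j → p (j + 2) * q (j + 3) - p (j + 3) * q (j + 2) =
      p j * q (j + 1) - p (j + 1) * q j := fun j hj => by
    have h3 := h.p_add_two (j + 1) (by omega)
    have h4 := h.q_add_two (j + 1) (by omega)
    rw [show j + 1 + 2 = j + 3 by ring, show j + 1 + 1 = j + 2 by ring] at h3 h4
    rw [h3, h4, h.p_add_two j hj, h.q_add_two j hj]; ring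
  obtain ⟨k, rfl⟩ := hodd
  induction k, (show -1 ≤ k by omega) using Int.leInduction with
  | base => norm_num [h.p_neg_one, h.q_neg_one, h.q_zero]
  | succ k hk ih =>
    rw [show 2 * (k + 1) + 1 = 2 * k + 1 + 2 by ring,
      show 2 * k + 1 + 2 + 1 = 2 * k + 1 + 3 by ring, hstep _ (by omega), ih (by omega)]

lemma ar_mul_ac_sub_eq_sqrt_disc_of_odd (h : IsConvergents D p q) {i : ℤ} (hi : -1 ≤ i)
    (hodd : Odd i) :
    ar D p q (i + 1) * ac D p q i - ar D p q i * ac D p q (i + 1) = √(disc D) := by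
  rw [ar_mul_ac_sub_ar_mul_ac, h.det_eq_one_of_odd hi hodd, omg_sub_omgc, Int.cast_one, one_mul]

lemma ar_pos_and_lt_succ (h : IsConvergents D p q) (hD : 2 ≤ D) (hsq : Squarefree D) {i : ℤ}
    (hi : -1 ≤ i) :
    0 < ar D p q i ∧ ar D p q i < ar D p q (i + 1) := by
  induction i, hi using Int.leInduction with
  | base =>
    have : (1 : ℝ) ≤ ⌊omg D⌋ := by
      exact_mod_cast Int.le_floor.2 (by exact_mod_cast (one_lt_omg hD).le)
    norm_num [ar, h.p_neg_one, h.q_neg_one, h.p_zero, h.q_zero]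
    linarith [omgc_neg hD]
  | succ i hi ih =>
    have hu : (1 : ℝ) ≤ uD D (i + 2).toNat := by exact_mod_cast one_le_uD hD hsq _
    rw [add_assoc, one_add_one_eq_two, h.ar_add_two hi]
    constructor <;> nlinarith

-- `-ac D p q i / ac D p q (i + 1)` is the complete quotient `gam D (i + 2)` of `σ_D`.
lemma ac_eq_neg_gam_mul_ac_succ (h : IsConvergents D p q) (hD : 2 ≤ D) (hsq : Squarefree D)
    {i : ℤ} (hi : -1 ≤ i) :
    ac D p q i = -gam D (i + 2).toNat * ac D p q (i + 1) := by
  induction i, hi using Int.leInduction with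
  | base =>
    have := gam_succ_mul_fract hD hsq 0
    rw [fract_gam_zero, Int.fract] at this
    norm_num [ac, h.p_neg_one, h.q_neg_one, h.p_zero, h.q_zero]
    linear_combination -this
  | succ i hi ih =>
    have hfr := gam_succ_mul_fract hD hsq (i + 2).toNat
    rw [Int.fract] at hfr
    rw [show (i + 1 + 2).toNat = (i + 2).toNat + 1 by omega, add_assoc, one_add_one_eq_two,
      h.ac_add_two hi, uD]
    linear_combination gam D ((i + 2).toNat + 1) * ih - ac D p q (i + 1) * hfr

lemma ac_succ_neg_of_odd (h : IsConvergents D p q) (hD : 2 ≤ D) (hsq : Squarefree D) {i : ℤ}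
    (hi : -1 ≤ i) (hodd : Odd i) : ac D p q (i + 1) < 0 := by
  have hdisc : 0 < √(disc D) := by
    rw [← omg_sub_omgc]; linarith [one_lt_omg hD, omgc_neg hD]
  have hcross := h.ar_mul_ac_sub_eq_sqrt_disc_of_odd hi hodd
  obtain ⟨hpos, hlt⟩ := h.ar_pos_and_lt_succ hD hsq hi
  have hg : 0 < gam D (i + 2).toNat := one_pos.trans (one_lt_gam hD hsq _)
  rw [h.ac_eq_neg_gam_mul_ac_succ hD hsq hi] at hcross
  nlinarith [mul_pos hg (hpos.trans hlt)]

lemma ac_pos_of_odd (h : IsConvergents D p q) (hD : 2 ≤ D) (hsq : Squarefree D) {i : ℤ}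
    (hi : -1 ≤ i) (hodd : Odd i) : 0 < ac D p q i := by
  rw [h.ac_eq_neg_gam_mul_ac_succ hD hsq hi, neg_mul, neg_pos]
  exact mul_neg_of_pos_of_neg (one_pos.trans (one_lt_gam hD hsq _))
    (h.ac_succ_neg_of_odd hD hsq hi hodd)

lemma ar_succ_mul_ac_lt_of_odd (h : IsConvergents D p q) (hD : 2 ≤ D) (hsq : Squarefree D)
    {i : ℤ} (hi : -1 ≤ i) (hodd : Odd i) : ar D p q (i + 1) * ac D p q i < √(disc D) := by
  have := mul_neg_of_pos_of_neg (h.ar_pos_and_lt_succ hD hsq hi).1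
    (h.ac_succ_neg_of_odd hD hsq hi hodd)
  linarith [h.ar_mul_ac_sub_eq_sqrt_disc_of_odd hi hodd]

end IsConvergents

theorem stmt15_general (D : ℕ)
    (hD2 : 2 ≤ D) (hsq : Squarefree D)
    (p q : ℤ → ℤ)
    (hpm1 : p (-1) = 1) (hqm1 : q (-1) = 0)
    (hp0 : p 0 = ⌈(uD D 0 : ℚ) / 2⌉) (hq0 : q 0 = 1)
    (hprec : ∀ i : ℤ, -1 ≤ i → p (i + 2) = uD D (i + 2).toNat * p (i + 1) + p i)
    (hqrec : ∀ i : ℤ, -1 ≤ i → q (i + 2) = uD D (i + 2).toNat * q (i + 1) + q i)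
    (i r e f : ℤ) (hi : -1 ≤ i) (hodd : Odd i)
    (hr0 : 0 ≤ r)
    (he : 1 ≤ e) (hf : 0 ≤ f) :
    ((e : ℝ) * ar2 D p q i r + (f : ℝ) * ar2 D p q i (r + 1)) *
      ((e : ℝ) * ac2 D p q i r + (f : ℝ) * ac2 D p q i (r + 1)) <
    Real.sqrt (disc D) * ((r + 1 : ℝ) * e + (r + 2 : ℝ) * f) * ((e : ℝ) + f) := by
  have h : IsConvergents D p q :=
    ⟨hpm1, hqm1, hp0.trans ceil_uD_zero_div_two, hq0, hprec, hqrec⟩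
  have he' : (1 : ℝ) ≤ e := by exact_mod_cast he
  have hf' : (0 : ℝ) ≤ f := by exact_mod_cast hf
  have hr' : (0 : ℝ) ≤ r := by exact_mod_cast hr0
  have hbound := semiconvergent_combination_mul_le (h.ar_pos_and_lt_succ hD2 hsq hi).1.le
    (h.ar_pos_and_lt_succ hD2 hsq hi).2.le (h.ac_pos_of_odd hD2 hsq hi hodd).le
    (h.ac_succ_neg_of_odd hD2 hsq hi hodd).le hr' (zero_le_one.trans he') hf'
  have hcoef : 0 < ((r + 1 : ℝ) * e + (r + 2 : ℝ) * f) * ((e : ℝ) + f) := by positivity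
  simp only [ar2, ac2, Int.cast_add, Int.cast_one]
  calc _ ≤ _ := hbound
    _ < _ := by
      rw [mul_assoc √(disc D), mul_comm √(disc D)]
      exact mul_lt_mul_of_pos_left (h.ar_succ_mul_ac_lt_of_odd hD2 hsq hi hodd) hcoef

theorem stmt15 (D : ℕ)
    (hD2 : 2 ≤ D) (hsq : Squarefree D)
    (p q : ℤ → ℤ)
    (hpm1 : p (-1) = 1) (hqm1 : q (-1) = 0)
    (hp0 : p 0 = ⌈(uD D 0 : ℚ) / 2⌉) (hq0 : q 0 = 1)
    (hprec : ∀ i : ℤ, -1 ≤ i → p (i + 2) = uD D (i + 2).toNat * p (i + 1) + p i)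
    (hqrec : ∀ i : ℤ, -1 ≤ i → q (i + 2) = uD D (i + 2).toNat * q (i + 1) + q i)
    (i r e f : ℤ) (hi : -1 ≤ i) (hodd : Odd i)
    (hr0 : 0 ≤ r) (hr : r < uD D (i + 2).toNat)
    (he : 1 ≤ e) (hf : 0 ≤ f)
    (hα : 0 < (e : ℝ) * ar2 D p q i r + (f : ℝ) * ar2 D p q i (r + 1) ∧
           0 < (e : ℝ) * ac2 D p q i r + (f : ℝ) * ac2 D p q i (r + 1)) :
    ((e : ℝ) * ar2 D p q i r + (f : ℝ) * ar2 D p q i (r + 1)) *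
      ((e : ℝ) * ac2 D p q i r + (f : ℝ) * ac2 D p q i (r + 1)) <
    Real.sqrt (disc D) * ((r + 1 : ℝ) * e + (r + 2 : ℝ) * f) * ((e : ℝ) + f) :=
  stmt15_general D hD2 hsq p q hpm1 hqm1 hp0 hq0 hprec hqrec i r e f hi hodd hr0 he hf
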